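/- Let f satisfy Condition B with constant K, let φ be a branching mechanism satisfying Grey's condition, let ψ be an immigration mechanism, let (Q_t)_{t≥0} be the transition semigroup of the CB-process with branching mechanism φ, and let (Q^γ_t)_{t≥0} be the transition semigroup of the CBI-process with branching mechanism φ and immigration mechanism ψ. Then for every probability measure μ on [0,∞) (the common law of the initial states) and every t ≥ 0, one has (as an inequality in [0,∞]): ∫_{[0,∞)} ∫_{[0,∞)} f(y) Q^γ_t(x,dy) μ(dx) ≤ (1/2) K f(2) [ ∫_{[0,∞)} f(y) Q^γ_t(0,dy) + ∫_{[0,∞)} ∫_{[0,∞)} f(y) Q_t(x,dy) μ(dx) ]. -/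

import Mathlib

/-!
The Laplace transform `e^{-∫₀ᵗ ψ(v_s(λ)) ds} · e^{-x v_t(λ)}` of `Q^γ_t(x, ·)` is that of the
convolution `Q^γ_t(0, ·) ∗ Q_t(x, ·)`, and a finite measure on `[0, ∞)` is determined by its
Laplace transform: `y ↦ e^{-y}` turns it into the moments of a measure on `[0, 1]`, which
determine that measure by Weierstrass approximation. Condition B gives, by submultiplicativity
and then convexity,
`f (y + z) = f (2 · (y + z) / 2) ≤ K f(2) f((y + z) / 2) ≤ K f(2) / 2 · (f y + f z)`,
and integrating this against `Q^γ_t(0, ·) ⊗ Q_t(x, ·)` and then against `μ` gives the bound.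
-/

open MeasureTheory Set Filter

noncomputable section

/-- A positive continuous function on `[0,∞)` satisfying Condition A:
there exist `c ≥ 0` and `K > 0` such that `f` is convex on `[c,∞)`,
`f (x*y) ≤ K * f x * f y` for `x, y ∈ [c,∞)`, and `f` is bounded on `[0,c)`. -/
def ConditionA (f : ℝ → ℝ) : Prop :=
  ContinuousOn f (Set.Ici 0) ∧ (∀ x, 0 ≤ x → 0 < f x) ∧
  ∃ c, 0 ≤ c ∧ ∃ K, 0 < K ∧
    ConvexOn ℝ (Set.Ici c) f ∧
    (∀ x y, c ≤ x → c ≤ y → f (x * y) ≤ K * f x * f y) ∧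
    ∃ M, ∀ x, 0 ≤ x → x < c → f x ≤ M

/-- Condition B with constant `K`: `f` is convex and nondecreasing on `[0,∞)`,
submultiplicative up to the constant `K`, and `f > 1` on `[0,∞)`. -/
def ConditionB (f : ℝ → ℝ) (K : ℝ) : Prop :=
  0 < K ∧ ConvexOn ℝ (Set.Ici 0) f ∧ MonotoneOn f (Set.Ici 0) ∧
  (∀ x y, 0 ≤ x → 0 ≤ y → f (x * y) ≤ K * f x * f y) ∧
  (∀ x, 0 ≤ x → 1 < f x)

/-- `φ` is a branching mechanism with parameters `β ∈ ℝ`, `σ ≥ 0` and Lévy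
measure `m` (a σ-finite measure carried by `(0,∞)` with `∫ 1 ∧ z² m(dz) < ∞`):
`φ(λ) = βλ + σ²λ²/2 + ∫ (e^{-zλ} - 1 + zλ 1_{z ≤ 1}) m(dz)`. -/
structure IsBranchingMechanism (φ : ℝ → ℝ) (β σ : ℝ) (m : Measure ℝ) : Prop where
  sigma_nonneg : 0 ≤ σ
  sigmaFinite : SigmaFinite m
  carrier : m (Set.Iic 0) = 0
  levy_finite : ∫⁻ z, ENNReal.ofReal (min 1 (z ^ 2)) ∂m < ⊤
  form : ∀ l, 0 ≤ l →
    φ l = β * l + σ ^ 2 * l ^ 2 / 2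
      + ∫ z, (Real.exp (-(z * l)) - 1 + (if z ≤ 1 then z * l else 0)) ∂m

/-- Grey's condition: `∫_{0+} φ(λ)⁻¹ dλ = ∞`, i.e. `φ⁻¹` fails to be
integrable on every right neighbourhood of `0`. -/
def GreyCondition (φ : ℝ → ℝ) : Prop :=
  ∀ ε, 0 < ε → ¬ IntegrableOn (fun l => (φ l)⁻¹) (Set.Ioo 0 ε) volume

/-- `v t l` is the nonnegative solution of `v_t(λ) = λ - ∫_0^t φ(v_s(λ)) ds`. -/
def IsCumulant (φ : ℝ → ℝ) (v : ℝ → ℝ → ℝ) : Prop :=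
  ∀ l, 0 ≤ l → ∀ t, 0 ≤ t →
    0 ≤ v t l ∧ v t l = l - ∫ s in (0:ℝ)..t, φ (v s l)

/-- `(Q t)_{t ≥ 0}` is the transition semigroup of the CB-process with cumulant
`v`: each `Q t x` is a probability measure on `[0,∞)` with Laplace transform
`∫ e^{-λ y} Q_t(x, dy) = e^{-x v_t(λ)}`. -/
def IsCBSemigroup (v : ℝ → ℝ → ℝ) (Q : ℝ → ℝ → Measure ℝ) : Prop :=
  ∀ t x, 0 ≤ t → 0 ≤ x →
    IsProbabilityMeasure (Q t x) ∧ Q t x (Set.Iio 0) = 0 ∧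
    ∀ l, 0 ≤ l → ∫ y, Real.exp (-(l * y)) ∂(Q t x) = Real.exp (-(x * v t l))

/-- `ψ` is an immigration mechanism with drift `h ≥ 0` and immigration measure
`ν` (a σ-finite measure carried by `(0,∞)` with `∫ 1 ∧ z ν(dz) < ∞`):
`ψ(λ) = hλ + ∫ (1 - e^{-λz}) ν(dz)`. -/
structure IsImmigrationMechanism (ψ : ℝ → ℝ) (h : ℝ) (ν : Measure ℝ) : Prop where
  h_nonneg : 0 ≤ h
  sigmaFinite : SigmaFinite ν
  carrier : ν (Set.Iic 0) = 0
  levy_finite : ∫⁻ z, ENNReal.ofReal (min 1 z) ∂ν < ⊤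
  form : ∀ l, 0 ≤ l → ψ l = h * l + ∫ z, (1 - Real.exp (-(l * z))) ∂ν

/-- `(Q^γ t)_{t ≥ 0}` is the transition semigroup of the CBI-process with
cumulant `v` and immigration mechanism `ψ`: each `Qγ t x` is a probability
measure on `[0,∞)` with Laplace transform
`∫ e^{-λ y} Q^γ_t(x, dy) = exp(-x v_t(λ) - ∫_0^t ψ(v_s(λ)) ds)`. -/
def IsCBISemigroup (v : ℝ → ℝ → ℝ) (ψ : ℝ → ℝ) (Qγ : ℝ → ℝ → Measure ℝ) : Prop :=
  ∀ t x, 0 ≤ t → 0 ≤ x →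
    IsProbabilityMeasure (Qγ t x) ∧ Qγ t x (Set.Iio 0) = 0 ∧
    ∀ l, 0 ≤ l →
      ∫ y, Real.exp (-(l * y)) ∂(Qγ t x)
        = Real.exp (-(x * v t l) - ∫ s in (0:ℝ)..t, ψ (v s l))

open scoped ENNReal

namespace MeasureTheory

variable {P P' : Measure ℝ}

lemma ae_nonneg_of_measure_Iio_eq_zero (h : P (Iio 0) = 0) : ∀ᵐ y ∂P, 0 ≤ y :=
  (mem_ae_iff (s := Ici 0)).2 (by rwa [compl_Ici])

section Icc

variable [IsFiniteMeasure P] {a b : ℝ}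

lemma integrable_of_ae_mem_Icc (hP : ∀ᵐ x ∂P, x ∈ Icc a b) {g : ℝ → ℝ} (hg : Continuous g) :
    Integrable g P := by
  rw [← Measure.restrict_eq_self_of_ae_mem hP]
  exact hg.integrableOn_Icc

lemma abs_integral_sub_le_of_ae_mem_Icc (hP : ∀ᵐ x ∂P, x ∈ Icc a b) {g q : ℝ → ℝ}
    (hg : Continuous g) (hq : Continuous q) {ε : ℝ} (hgq : ∀ x ∈ Icc a b, |g x - q x| ≤ ε) :
    |∫ x, g x ∂P - ∫ x, q x ∂P| ≤ ε * P.real univ := by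
  rw [← integral_sub (integrable_of_ae_mem_Icc hP hg) (integrable_of_ae_mem_Icc hP hq)]
  exact norm_integral_le_of_norm_le_const <|
    hP.mono fun x hx => (Real.norm_eq_abs _).trans_le (hgq x hx)

variable [IsFiniteMeasure P']

lemma integral_polynomial_eq_of_moments_eq (hP : ∀ᵐ x ∂P, x ∈ Icc a b)
    (hP' : ∀ᵐ x ∂P', x ∈ Icc a b) (h : ∀ n : ℕ, ∫ x, x ^ n ∂P = ∫ x, x ^ n ∂P')
    (q : Polynomial ℝ) : ∫ x, q.eval x ∂P = ∫ x, q.eval x ∂P' := by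
  induction q using Polynomial.induction_on' with
  | add p q hp hq =>
    simp only [Polynomial.eval_add]
    rw [integral_add (integrable_of_ae_mem_Icc hP p.continuous)
        (integrable_of_ae_mem_Icc hP q.continuous),
      integral_add (integrable_of_ae_mem_Icc hP' p.continuous)
        (integrable_of_ae_mem_Icc hP' q.continuous), hp, hq]
  | monomial n c =>
    simp only [Polynomial.eval_monomial]
    rw [integral_const_mul, integral_const_mul, h n]

theorem Measure.ext_of_moments_eq (hP : ∀ᵐ x ∂P, x ∈ Icc a b)
    (hP' : ∀ᵐ x ∂P', x ∈ Icc a b) (h : ∀ n : ℕ, ∫ x, x ^ n ∂P = ∫ x, x ^ n ∂P') : P = P' := by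
  have hmass : P'.real univ = P.real univ := by simpa using (h 0).symm
  refine ext_of_forall_integral_eq_of_IsFiniteMeasure fun g => ?_
  refine eq_of_forall_dist_le fun ε hε => ?_
  set M := P.real univ
  obtain ⟨q, hq⟩ := exists_polynomial_near_of_continuousOn a b g g.continuous.continuousOn
    (ε / (2 * (M + 1))) (by positivity)
  have hgq : ∀ x ∈ Icc a b, |g x - q.eval x| ≤ ε / (2 * (M + 1)) := fun x hx =>
    (abs_sub_comm _ _).trans_le (hq x hx).le
  have h1 := abs_integral_sub_le_of_ae_mem_Icc hP g.continuous q.continuous hgq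
  have h2 := abs_integral_sub_le_of_ae_mem_Icc hP' g.continuous q.continuous hgq
  rw [integral_polynomial_eq_of_moments_eq hP hP' h q] at h1
  rw [hmass] at h2
  have hM : 0 ≤ M := measureReal_nonneg
  have hsmall : ε / (2 * (M + 1)) * M ≤ ε / 2 := by
    rw [div_mul_eq_mul_div, div_le_div_iff₀ (by positivity) two_pos]
    nlinarith
  calc dist (∫ x, g x ∂P) (∫ x, g x ∂P')
      ≤ |∫ x, g x ∂P - ∫ x, q.eval x ∂P'| + |∫ x, g x ∂P' - ∫ x, q.eval x ∂P'| := by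
        rw [Real.dist_eq, abs_sub_comm (∫ x, g x ∂P')]
        exact abs_sub_le _ _ _
    _ ≤ ε := by linarith

end Icc

theorem Measure.ext_of_laplace_eq [IsFiniteMeasure P] [IsFiniteMeasure P']
    (hP : ∀ᵐ y ∂P, 0 ≤ y) (hP' : ∀ᵐ y ∂P', 0 ≤ y)
    (h : ∀ l, 0 ≤ l → ∫ y, Real.exp (-(l * y)) ∂P = ∫ y, Real.exp (-(l * y)) ∂P') :
    P = P' := by
  -- `y ↦ e^{-y}` turns Laplace transforms at integer points into moments on `[0, 1]`
  let e : ℝ → ℝ := fun y => Real.exp (-y)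
  have he : MeasurableEmbedding e := (Real.continuous_exp.comp continuous_neg).measurableEmbedding
    fun a b hab => neg_injective (Real.exp_injective hab)
  have hIcc {ρ : Measure ℝ} (hρ : ∀ᵐ y ∂ρ, 0 ≤ y) : ∀ᵐ x ∂ρ.map e, x ∈ Icc 0 1 :=
    (ae_map_iff he.measurable.aemeasurable measurableSet_Icc).2 <| hρ.mono fun y hy =>
      ⟨(Real.exp_pos _).le, Real.exp_le_one_iff.2 (neg_nonpos.2 hy)⟩
  have hpow (n : ℕ) (y : ℝ) : e y ^ n = Real.exp (-(n * y)) := by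
    rw [← Real.exp_nat_mul, mul_neg]
  refine he.map_injective (Measure.ext_of_moments_eq (hIcc hP) (hIcc hP') fun n => ?_)
  rw [integral_map he.measurable.aemeasurable (by fun_prop),
    integral_map he.measurable.aemeasurable (by fun_prop)]
  simpa only [hpow] using h n n.cast_nonneg

lemma ae_nonneg_conv [SFinite P] [SFinite P'] (hP : ∀ᵐ y ∂P, 0 ≤ y) (hP' : ∀ᵐ y ∂P', 0 ≤ y) :
    ∀ᵐ z ∂(P ∗ P'), 0 ≤ z := by
  refine (ae_map_iff (by fun_prop) measurableSet_Ici).2 ?_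
  filter_upwards [Measure.quasiMeasurePreserving_fst.ae hP,
    Measure.quasiMeasurePreserving_snd.ae hP'] with p h1 h2
  exact add_nonneg h1 h2

lemma integral_exp_neg_mul_conv [SFinite P] [SFinite P'] (l : ℝ) :
    ∫ z, Real.exp (-(l * z)) ∂(P ∗ P')
      = (∫ y, Real.exp (-(l * y)) ∂P) * ∫ y, Real.exp (-(l * y)) ∂P' := by
  rw [Measure.conv, integral_map (by fun_prop) (by fun_prop), ← integral_prod_mul]
  congr with p
  rw [← Real.exp_add]
  ring_nf

lemma eq_conv_of_laplace_eq_mul {S : Measure ℝ} [IsFiniteMeasure P] [IsFiniteMeasure P']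
    [IsFiniteMeasure S] (hP : ∀ᵐ y ∂P, 0 ≤ y) (hP' : ∀ᵐ y ∂P', 0 ≤ y) (hS : ∀ᵐ y ∂S, 0 ≤ y)
    (h : ∀ l, 0 ≤ l → ∫ y, Real.exp (-(l * y)) ∂S
      = (∫ y, Real.exp (-(l * y)) ∂P) * ∫ y, Real.exp (-(l * y)) ∂P') :
    S = P ∗ P' :=
  Measure.ext_of_laplace_eq hS (ae_nonneg_conv hP hP') fun l hl => by
    rw [h l hl, integral_exp_neg_mul_conv]

lemma lintegral_conv_le_of_le_add [IsProbabilityMeasure P] [IsProbabilityMeasure P']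
    (hP : ∀ᵐ y ∂P, 0 ≤ y) (hP' : ∀ᵐ y ∂P', 0 ≤ y) {F : ℝ → ℝ≥0∞} (hF : Measurable F)
    {c : ℝ≥0∞} (hc : c ≠ ⊤) (hadd : ∀ y z, 0 ≤ y → 0 ≤ z → F (y + z) ≤ c * (F y + F z)) :
    ∫⁻ z, F z ∂(P ∗ P') ≤ c * (∫⁻ y, F y ∂P + ∫⁻ y, F y ∂P') := by
  have hinner : ∀ᵐ y ∂P, ∫⁻ z, F (y + z) ∂P' ≤ c * (F y + ∫⁻ z, F z ∂P') := by
    filter_upwards [hP] with y hy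
    calc ∫⁻ z, F (y + z) ∂P' ≤ ∫⁻ z, c * (F y + F z) ∂P' :=
          lintegral_mono_ae (hP'.mono fun z hz => hadd y z hy hz)
      _ = c * (F y + ∫⁻ z, F z ∂P') := by
          rw [lintegral_const_mul' _ _ hc, lintegral_add_left measurable_const, lintegral_const,
            measure_univ, mul_one]
  calc ∫⁻ z, F z ∂(P ∗ P') ≤ ∫⁻ y, c * (F y + ∫⁻ z, F z ∂P') ∂P := by
        rw [Measure.lintegral_conv hF]
        exact lintegral_mono_ae hinner
    _ = c * (∫⁻ y, F y ∂P + ∫⁻ y, F y ∂P') := by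
        rw [lintegral_const_mul' _ _ hc, lintegral_add_right _ measurable_const, lintegral_const,
          measure_univ, mul_one]

end MeasureTheory

lemma ConditionB.pos {f : ℝ → ℝ} {K : ℝ} (hf : ConditionB f K) {x : ℝ} (hx : 0 ≤ x) :
    0 < f x :=
  zero_lt_one.trans (hf.2.2.2.2 x hx)

lemma ConditionB.mul_apply_two_nonneg {f : ℝ → ℝ} {K : ℝ} (hf : ConditionB f K) : 0 ≤ K * f 2 :=
  mul_nonneg hf.1.le (hf.pos zero_le_two).le

lemma ConditionB.apply_add_le {f : ℝ → ℝ} {K : ℝ} (hf : ConditionB f K) {y z : ℝ} (hy : 0 ≤ y)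
    (hz : 0 ≤ z) : f (y + z) ≤ K * f 2 / 2 * (f y + f z) := by
  have hmid : f ((y + z) / 2) ≤ (f y + f z) / 2 := by
    have := hf.2.1.2 hy hz (by norm_num : (0 : ℝ) ≤ 1 / 2) (by norm_num : (0 : ℝ) ≤ 1 / 2)
      (by norm_num)
    simp only [smul_eq_mul] at this
    calc f ((y + z) / 2) = f (1 / 2 * y + 1 / 2 * z) := by ring_nf
      _ ≤ 1 / 2 * f y + 1 / 2 * f z := this
      _ = (f y + f z) / 2 := by ring
  calc f (y + z) = f (2 * ((y + z) / 2)) := by congr 1; ring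
    _ ≤ K * f 2 * f ((y + z) / 2) := hf.2.2.2.1 2 _ zero_le_two (by positivity)
    _ ≤ K * f 2 * ((f y + f z) / 2) := mul_le_mul_of_nonneg_left hmid hf.mul_apply_two_nonneg
    _ = K * f 2 / 2 * (f y + f z) := by ring

lemma ConditionB.lintegral_conv_le {f : ℝ → ℝ} {K : ℝ} (hf : ConditionB f K) {P P' : Measure ℝ}
    [IsProbabilityMeasure P] [IsProbabilityMeasure P'] (hP : ∀ᵐ y ∂P, 0 ≤ y)
    (hP' : ∀ᵐ y ∂P', 0 ≤ y) :
    ∫⁻ z, ENNReal.ofReal (f z) ∂(P ∗ P')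
      ≤ ENNReal.ofReal (K * f 2 / 2)
        * (∫⁻ y, ENNReal.ofReal (f y) ∂P + ∫⁻ y, ENNReal.ofReal (f y) ∂P') := by
  -- `f` is only monotone on `[0, ∞)`; extending it by `f 0` to the left makes it measurable
  let F : ℝ → ℝ≥0∞ := fun y => ENNReal.ofReal (f (max y 0))
  have hF : Measurable F := ENNReal.measurable_ofReal.comp <| Monotone.measurable fun a b hab =>
    hf.2.2.1 (le_max_right a 0) (le_max_right b 0) (max_le_max_right 0 hab)
  have hfF {ρ : Measure ℝ} (hρ : ∀ᵐ y ∂ρ, 0 ≤ y) :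
      ∫⁻ y, ENNReal.ofReal (f y) ∂ρ = ∫⁻ y, F y ∂ρ :=
    lintegral_congr_ae <| hρ.mono fun y hy => by simp only [F, max_eq_left hy]
  rw [hfF hP, hfF hP', hfF (ae_nonneg_conv hP hP')]
  refine lintegral_conv_le_of_le_add hP hP' hF ENNReal.ofReal_ne_top fun y z hy hz => ?_
  simp only [F, max_eq_left hy, max_eq_left hz, max_eq_left (add_nonneg hy hz)]
  rw [← ENNReal.ofReal_add (hf.pos hy).le (hf.pos hz).le,
    ← ENNReal.ofReal_mul (div_nonneg hf.mul_apply_two_nonneg zero_le_two)]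
  exact ENNReal.ofReal_le_ofReal (hf.apply_add_le hy hz)

lemma IsCBISemigroup.eq_conv {v : ℝ → ℝ → ℝ} {ψ : ℝ → ℝ} {Q Qγ : ℝ → ℝ → Measure ℝ}
    (hQ : IsCBSemigroup v Q) (hQγ : IsCBISemigroup v ψ Qγ) {t x : ℝ} (ht : 0 ≤ t) (hx : 0 ≤ x) :
    Qγ t x = Qγ t 0 ∗ Q t x := by
  obtain ⟨hQprob, hQ0, hQlap⟩ := hQ t x ht hx
  obtain ⟨hQγprob, hQγ0, hQγlap⟩ := hQγ t x ht hx
  obtain ⟨hQγprob₀, hQγ0₀, hQγlap₀⟩ := hQγ t 0 ht le_rfl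
  refine eq_conv_of_laplace_eq_mul (ae_nonneg_of_measure_Iio_eq_zero hQγ0₀)
    (ae_nonneg_of_measure_Iio_eq_zero hQ0) (ae_nonneg_of_measure_Iio_eq_zero hQγ0) fun l hl => ?_
  rw [hQγlap l hl, hQγlap₀ l hl, hQlap l hl, ← Real.exp_add]
  ring_nf

theorem cbi_f_moment_bound_general
    (f : ℝ → ℝ) (K : ℝ) (hf : ConditionB f K)
    (ψ : ℝ → ℝ)
    (v : ℝ → ℝ → ℝ)
    (Q : ℝ → ℝ → Measure ℝ) (hQ : IsCBSemigroup v Q)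
    (Qγ : ℝ → ℝ → Measure ℝ) (hQγ : IsCBISemigroup v ψ Qγ)
    (μ : Measure ℝ) (hμ : IsProbabilityMeasure μ) (hμ0 : μ (Set.Iio 0) = 0)
    (t : ℝ) (ht : 0 ≤ t) :
    (∫⁻ x, (∫⁻ y, ENNReal.ofReal (f y) ∂(Qγ t x)) ∂μ)
      ≤ ENNReal.ofReal (K * f 2 / 2)
          * ((∫⁻ y, ENNReal.ofReal (f y) ∂(Qγ t 0))
              + ∫⁻ x, (∫⁻ y, ENNReal.ofReal (f y) ∂(Q t x)) ∂μ) := by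
  calc ∫⁻ x, ∫⁻ y, ENNReal.ofReal (f y) ∂(Qγ t x) ∂μ
      ≤ ∫⁻ x, ENNReal.ofReal (K * f 2 / 2) * (∫⁻ y, ENNReal.ofReal (f y) ∂(Qγ t 0)
          + ∫⁻ y, ENNReal.ofReal (f y) ∂(Q t x)) ∂μ := by
        refine lintegral_mono_ae <| (ae_nonneg_of_measure_Iio_eq_zero hμ0).mono fun x hx => ?_
        obtain ⟨hQprob, hQ0, -⟩ := hQ t x ht hx
        obtain ⟨hQγprob₀, hQγ0₀, -⟩ := hQγ t 0 ht le_rfl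
        rw [hQγ.eq_conv hQ ht hx]
        exact hf.lintegral_conv_le (ae_nonneg_of_measure_Iio_eq_zero hQγ0₀)
          (ae_nonneg_of_measure_Iio_eq_zero hQ0)
    _ = _ := by
        rw [lintegral_const_mul' _ _ ENNReal.ofReal_ne_top, lintegral_add_left measurable_const,
          lintegral_const, measure_univ, mul_one]

/-- Proposition 4.3: for a CB-process and a CBI-process with the same initial
law `μ`, `P f(Y_t) ≤ (1/2) K f(2) [∫ f dQ^γ_t(0,·) + P f(X_t)]`
as an inequality in `[0,∞]`. -/
theorem cbi_f_moment_bound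
    (f : ℝ → ℝ) (K : ℝ) (hf : ConditionB f K)
    (φ : ℝ → ℝ) (β σ : ℝ) (m : Measure ℝ)
    (hφ : IsBranchingMechanism φ β σ m) (hGrey : GreyCondition φ)
    (ψ : ℝ → ℝ) (h : ℝ) (ν : Measure ℝ)
    (hψ : IsImmigrationMechanism ψ h ν)
    (v : ℝ → ℝ → ℝ) (hv : IsCumulant φ v)
    (Q : ℝ → ℝ → Measure ℝ) (hQ : IsCBSemigroup v Q)
    (Qγ : ℝ → ℝ → Measure ℝ) (hQγ : IsCBISemigroup v ψ Qγ)
    (μ : Measure ℝ) (hμ : IsProbabilityMeasure μ) (hμ0 : μ (Set.Iio 0) = 0)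
    (t : ℝ) (ht : 0 ≤ t) :
    (∫⁻ x, (∫⁻ y, ENNReal.ofReal (f y) ∂(Qγ t x)) ∂μ)
      ≤ ENNReal.ofReal (K * f 2 / 2)
          * ((∫⁻ y, ENNReal.ofReal (f y) ∂(Qγ t 0))
              + ∫⁻ x, (∫⁻ y, ENNReal.ofReal (f y) ∂(Q t x)) ∂μ) :=
  cbi_f_moment_bound_general f K hf ψ v Q hQ Qγ hQγ μ hμ hμ0 t ht
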